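/- arXiv:0704.3937 — 5 statements merged into one kernel-verified Lean document; each statement's English description precedes it below -/
import Mathlib

section
/- For every q_0 > 0 there is a constant C = C(q_0) > 0 such that for every sequence of weights (p_n) ⊂ (0,1), every n ≥ 1 and every q ≥ q_0, the second derivative of τ_{μ,n} satisfies 0 ≤ τ_{μ,n}''(q) ≤ C. In particular the functions (τ_{μ,n}'')_n are locally uniformly bounded on (0,∞). -/
open MeasureTheory Filter Set

noncomputable section

/-- The generation-`n` cylinder `I_{ε₁…εₙ} = {x ∈ Σ : x₁ = ε₁, …, xₙ = εₙ}`; the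
collection `F_n` of all `2^n` cylinders of generation `n` is the range of
`ε ↦ cyl ε` over `ε : Fin n → Bool`. -/
def cyl {n : ℕ} (ε : Fin n → Bool) : Set (ℕ → Bool) :=
  {x | ∀ i : Fin n, x (i : ℕ) = ε i}

/-- `μ` is the inhomogeneous Bernoulli product with weights `(pₙ)`: the Borel
probability measure determined by `μ(I_{ε₁…εₙ}) = ∏_{j=1}^n pⱼ^{1-εⱼ} (1-pⱼ)^{εⱼ}`. -/
def IsBernoulliProduct (p : ℕ → ℝ) (μ : Measure (ℕ → Bool)) : Prop :=
  IsProbabilityMeasure μ ∧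
    ∀ (n : ℕ) (ε : Fin n → Bool),
      μ (cyl ε) = ENNReal.ofReal (∏ i : Fin n, if ε i then 1 - p (i : ℕ) else p (i : ℕ))

/-- `τ_{μ,n}(q) = (1/(n log 2)) · log ∑_{I ∈ F_n} μ(I)^q`. -/
def tauN (μ : Measure (ℕ → Bool)) (n : ℕ) (q : ℝ) : ℝ :=
  (1 / (n * Real.log 2)) * Real.log (∑ ε : Fin n → Bool, (μ (cyl ε)).toReal ^ q)

/-- The `L^q`-spectrum `τ_μ(q) = limsup_{n→∞} τ_{μ,n}(q)`. -/
def tauLq (μ : Measure (ℕ → Bool)) (q : ℝ) : ℝ :=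
  limsup (fun n : ℕ => tauN μ n q) atTop


/-
The Bernoulli product makes the partition function `∑_I μ(I)^q` factor as
`∏_j (p_j^q + (1 - p_j)^q)`, so `τ_{μ,n}` is the average over `j < n` of
`log (p_j^q + (1 - p_j)^q) / log 2`. The second derivative of `q ↦ log (a^q + b^q)` is the
variance of `log` under the escort distribution `(a^q, b^q) / (a^q + b^q)`, hence nonnegative, and
for `r = a / b ≤ 1` it is at most `r^q (log r)^2 ≤ 4 / q^2`, because `|log r| r^{q/2} < 2 / q`.
-/
open Real

section TwoPoint

variable {a b : ℝ}

def escortLogVariance (a b q : ℝ) : ℝ :=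
  a ^ q * b ^ q * (log a - log b) ^ 2 / (a ^ q + b ^ q) ^ 2

lemma escortLogVariance_nonneg (ha : 0 ≤ a) (hb : 0 ≤ b) (q : ℝ) :
    0 ≤ escortLogVariance a b q := by
  unfold escortLogVariance
  positivity

lemma hasDerivAt_log_rpow_add_rpow (ha : 0 < a) (hb : 0 < b) (q : ℝ) :
    HasDerivAt (fun q => log (a ^ q + b ^ q))
      ((a ^ q * log a + b ^ q * log b) / (a ^ q + b ^ q)) q :=
  ((hasStrictDerivAt_const_rpow ha q).hasDerivAt.fun_add
    (hasStrictDerivAt_const_rpow hb q).hasDerivAt).log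
    (add_pos (rpow_pos_of_pos ha q) (rpow_pos_of_pos hb q)).ne'

lemma hasDerivAt_rpow_mul_log_add_div (ha : 0 < a) (hb : 0 < b) (q : ℝ) :
    HasDerivAt (fun q => (a ^ q * log a + b ^ q * log b) / (a ^ q + b ^ q))
      (escortLogVariance a b q) q := by
  have hA := (hasStrictDerivAt_const_rpow ha q).hasDerivAt
  have hB := (hasStrictDerivAt_const_rpow hb q).hasDerivAt
  refine (((hA.mul_const (log a)).fun_add (hB.mul_const (log b))).fun_div (hA.fun_add hB)
    (add_pos (rpow_pos_of_pos ha q) (rpow_pos_of_pos hb q)).ne').congr_deriv ?_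
  rw [escortLogVariance]
  ring

lemma iteratedDeriv_two_log_rpow_add_rpow (ha : 0 < a) (hb : 0 < b) (q : ℝ) :
    iteratedDeriv 2 (fun q => log (a ^ q + b ^ q)) q = escortLogVariance a b q := by
  rw [iteratedDeriv_succ, iteratedDeriv_one,
    funext fun q => (hasDerivAt_log_rpow_add_rpow ha hb q).deriv]
  exact (hasDerivAt_rpow_mul_log_add_div ha hb q).deriv

lemma contDiff_log_rpow_add_rpow (ha : 0 < a) (hb : 0 < b) {n : WithTop ℕ∞} :
    ContDiff ℝ n fun q : ℝ => log (a ^ q + b ^ q) := by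
  simp_rw [rpow_def_of_pos ha, rpow_def_of_pos hb]
  have : ContDiff ℝ n fun q : ℝ => exp (log a * q) + exp (log b * q) := by fun_prop
  exact this.log fun q => by positivity

lemma rpow_mul_log_sq_le {r q : ℝ} (hr₀ : 0 < r) (hr₁ : r ≤ 1) (hq : 0 < q) :
    r ^ q * log r ^ 2 ≤ 4 / q ^ 2 := by
  have h := abs_log_mul_self_rpow_lt r (q / 2) hr₀ hr₁ (by positivity)
  calc r ^ q * log r ^ 2 = |log r * r ^ (q / 2)| ^ 2 := by
        rw [sq_abs, mul_pow, ← rpow_mul_natCast hr₀.le]; ring_nf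
    _ ≤ (1 / (q / 2)) ^ 2 := by gcongr
    _ = 4 / q ^ 2 := by ring

lemma escortLogVariance_le {q : ℝ} (ha : 0 < a) (hb : 0 < b) (hq : 0 < q) :
    escortLogVariance a b q ≤ 4 / q ^ 2 := by
  wlog hab : a ≤ b generalizing a b
  · convert this hb ha (le_of_not_ge hab) using 1
    unfold escortLogVariance
    ring
  have hbq : 0 < b ^ q := rpow_pos_of_pos hb q
  calc escortLogVariance a b q
      ≤ a ^ q * b ^ q * (log a - log b) ^ 2 / (b ^ q) ^ 2 := by
        unfold escortLogVariance
        gcongr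
        linarith [rpow_pos_of_pos ha q]
    _ = (a / b) ^ q * log (a / b) ^ 2 := by
        rw [div_rpow ha.le hb.le, log_div ha.ne' hb.ne']
        field_simp
    _ ≤ 4 / q ^ 2 := rpow_mul_log_sq_le (by positivity) (div_le_one_of_le₀ hab hb.le) hq

end TwoPoint

section BernoulliProduct

variable {p : ℕ → ℝ} {μ : Measure (ℕ → Bool)}

lemma sum_measure_cyl_rpow (hp : ∀ k, p k ∈ Icc (0 : ℝ) 1) (hμ : IsBernoulliProduct p μ)
    (n : ℕ) (q : ℝ) :
    ∑ ε : Fin n → Bool, (μ (cyl ε)).toReal ^ q = ∏ i : Fin n, (p i ^ q + (1 - p i) ^ q) := by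
  have hw : ∀ (i : Fin n) (b : Bool), 0 ≤ if b then 1 - p i else p i := fun i b => by
    cases b <;> simp [(hp i).1, (hp i).2]
  calc ∑ ε : Fin n → Bool, (μ (cyl ε)).toReal ^ q
      = ∑ ε : Fin n → Bool, ∏ i, (if ε i then 1 - p i else p i) ^ q := by
        refine Finset.sum_congr rfl fun ε _ => ?_
        rw [hμ.2 n ε, ENNReal.toReal_ofReal (Finset.prod_nonneg fun i _ => hw i (ε i)),
          finsetProd_rpow _ _ (fun i _ => hw i (ε i))]
    _ = ∏ i : Fin n, ∑ b : Bool, (if b then 1 - p i else p i) ^ q :=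
        (Fintype.prod_sum fun (i : Fin n) (b : Bool) => (if b then 1 - p i else p i) ^ q).symm
    _ = ∏ i : Fin n, (p i ^ q + (1 - p i) ^ q) := by simp [add_comm]

lemma tauN_eq_sum_log (hp : ∀ k, p k ∈ Ioo (0 : ℝ) 1) (hμ : IsBernoulliProduct p μ) (n : ℕ) :
    tauN μ n = fun q => 1 / (n * log 2) * ∑ i : Fin n, log (p i ^ q + (1 - p i) ^ q) := by
  funext q
  rw [tauN, sum_measure_cyl_rpow (fun k => Ioo_subset_Icc_self (hp k)) hμ, log_prod]
  intro i _
  have := (hp i).1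
  have := sub_pos.2 (hp i).2
  positivity

end BernoulliProduct

/-- Lemma 2.1. For every `q₀ > 0` there is a constant `C = C(q₀) > 0`
such that for every sequence of weights `(pₙ) ⊂ (0,1)`, every `n ≥ 1` and every `q ≥ q₀`,
the second derivative of `τ_{μ,n}` satisfies `0 ≤ τ_{μ,n}''(q) ≤ C`. In particular the
functions `(τ_{μ,n}'')ₙ` are locally uniformly bounded on `(0,∞)`. -/
theorem statement4 (q₀ : ℝ) (hq₀ : 0 < q₀) :
    ∃ C : ℝ, 0 < C ∧
      ∀ (p : ℕ → ℝ), (∀ k, p k ∈ Set.Ioo (0 : ℝ) 1) →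
        ∀ (μ : Measure (ℕ → Bool)), IsBernoulliProduct p μ →
          ∀ n : ℕ, 1 ≤ n → ∀ q : ℝ, q₀ ≤ q →
            0 ≤ iteratedDeriv 2 (tauN μ n) q ∧ iteratedDeriv 2 (tauN μ n) q ≤ C := by
  refine ⟨4 / (q₀ ^ 2 * log 2), by positivity, fun p hp μ hμ n hn q hq₀q => ?_⟩
  have hq : 0 < q := hq₀.trans_le hq₀q
  have hp₀ (i : Fin n) : 0 < p i := (hp i).1
  have hp₁ (i : Fin n) : 0 < 1 - p i := sub_pos.2 (hp i).2
  have hτ : iteratedDeriv 2 (tauN μ n) q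
      = 1 / (n * log 2) * ∑ i : Fin n, escortLogVariance (p i) (1 - p i) q := by
    rw [tauN_eq_sum_log hp hμ, iteratedDeriv_const_mul_field, iteratedDeriv_fun_sum
      fun i _ => (contDiff_log_rpow_add_rpow (hp₀ i) (hp₁ i)).contDiffAt]
    simp only [iteratedDeriv_two_log_rpow_add_rpow (hp₀ _) (hp₁ _)]
  rw [hτ]
  refine ⟨mul_nonneg (by positivity) (Finset.sum_nonneg fun i _ =>
    escortLogVariance_nonneg (hp₀ i).le (hp₁ i).le q), ?_⟩
  calc 1 / (n * log 2) * ∑ i : Fin n, escortLogVariance (p i) (1 - p i) q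
      ≤ 1 / (n * log 2) * ∑ _i : Fin n, 4 / q ^ 2 := by
        gcongr with i
        exact escortLogVariance_le (hp₀ i) (hp₁ i) hq
    _ = 4 / (q ^ 2 * log 2) := by
        simp only [Finset.sum_const, Finset.card_univ, Fintype.card_fin, nsmul_eq_mul]
        field_simp
    _ ≤ 4 / (q₀ ^ 2 * log 2) := by gcongr
end
end

section
/- Let μ be an inhomogeneous Bernoulli product on Σ with weights (p_n) ⊂ (0,1), let q ∈ ℝ, and let ν be the inhomogeneous Bernoulli product with weights p_n' = p_n^q/(p_n^q + (1-p_n)^q) (the Gibbs measure associated to μ and q). Then for every n ≥ 1 and every s ∈ ℝ, τ_{ν,n}(s) = τ_{μ,n}(qs) − s·τ_{μ,n}(q). -/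
open MeasureTheory Filter Set

noncomputable section

/-
For a Bernoulli product with weights `r`, the partition sum `∑_{I ∈ F_n} m(I)^t` factorises
as `∏_{i<n} (r_i^t + (1 - r_i)^t)`. For the Gibbs weights `p'_i = p_i^q / Z_i`, with
`Z_i = p_i^q + (1-p_i)^q`, each factor becomes `(p_i^{qs} + (1-p_i)^{qs}) / Z_i^s`, so the partition
sum of `ν` at `s` is that of `μ` at `qs` divided by the `s`-th power of that of `μ` at `q`;
taking logarithms gives the identity.
-/

namespace IsBernoulliProduct

variable {r : ℕ → ℝ} {m : Measure (ℕ → Bool)}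

lemma toReal_cyl (hm : IsBernoulliProduct r m) (hr : ∀ k, r k ∈ Icc (0 : ℝ) 1)
    {n : ℕ} (ε : Fin n → Bool) :
    (m (cyl ε)).toReal = ∏ i : Fin n, if ε i then 1 - r i else r i := by
  refine (hm.2 n ε).symm ▸ ENNReal.toReal_ofReal (Finset.prod_nonneg fun i _ => ?_)
  split_ifs <;> linarith [(hr i).1, (hr i).2]

lemma sum_cyl_rpow (hm : IsBernoulliProduct r m) (hr : ∀ k, r k ∈ Icc (0 : ℝ) 1)
    (n : ℕ) (t : ℝ) :
    ∑ ε : Fin n → Bool, (m (cyl ε)).toReal ^ t = ∏ i : Fin n, (r i ^ t + (1 - r i) ^ t) := by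
  have hfactor (i : Fin n) (b : Bool) : (0 : ℝ) ≤ if b then 1 - r i else r i := by
    split_ifs <;> linarith [(hr i).1, (hr i).2]
  calc ∑ ε : Fin n → Bool, (m (cyl ε)).toReal ^ t
      = ∑ ε : Fin n → Bool, ∏ i : Fin n, (if ε i then (1 - r i) ^ t else r i ^ t) := by
        refine Fintype.sum_congr _ _ fun ε => ?_
        rw [hm.toReal_cyl hr, ← Real.finsetProd_rpow _ _ fun i _ => hfactor i (ε i)]
        exact Finset.prod_congr rfl fun i _ => apply_ite (· ^ t) _ _ _
    _ = ∏ i : Fin n, ∑ b : Bool, (if b then (1 - r i) ^ t else r i ^ t) := by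
        rw [Finset.prod_univ_sum, Fintype.piFinset_univ]
    _ = ∏ i : Fin n, (r i ^ t + (1 - r i) ^ t) := by
        simp only [Fintype.sum_bool, if_true, Bool.false_eq_true, if_false, add_comm]

lemma tauN_eq (hm : IsBernoulliProduct r m) (hr : ∀ k, r k ∈ Icc (0 : ℝ) 1) (n : ℕ) (t : ℝ) :
    tauN m n t = 1 / (n * Real.log 2) * Real.log (∏ i : Fin n, (r i ^ t + (1 - r i) ^ t)) := by
  rw [tauN, hm.sum_cyl_rpow hr]

end IsBernoulliProduct

lemma rpow_div_add_rpow_mem_Icc {a b : ℝ} (ha : 0 < a) (hb : 0 < b) (q : ℝ) :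
    a ^ q / (a ^ q + b ^ q) ∈ Icc (0 : ℝ) 1 := by
  have haq := Real.rpow_pos_of_pos ha q
  have hbq := Real.rpow_pos_of_pos hb q
  exact ⟨by positivity, (div_le_one (by positivity)).2 (by linarith)⟩

lemma one_sub_rpow_div_add_rpow {a b : ℝ} (ha : 0 < a) (hb : 0 < b) (q : ℝ) :
    1 - a ^ q / (a ^ q + b ^ q) = b ^ q / (a ^ q + b ^ q) := by
  have : 0 < a ^ q + b ^ q := by positivity
  field_simp
  ring

lemma rpow_div_add_rpow_rpow_add {a b : ℝ} (ha : 0 < a) (hb : 0 < b) (q s : ℝ) :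
    (a ^ q / (a ^ q + b ^ q)) ^ s + (b ^ q / (a ^ q + b ^ q)) ^ s
      = (a ^ (q * s) + b ^ (q * s)) / (a ^ q + b ^ q) ^ s := by
  have hZ : 0 ≤ a ^ q + b ^ q := by positivity
  rw [Real.div_rpow (by positivity) hZ, Real.div_rpow (by positivity) hZ,
    ← Real.rpow_mul ha.le, ← Real.rpow_mul hb.le, add_div]

/-- Let `μ` be an inhomogeneous Bernoulli product with weights
`(pₙ) ⊂ (0,1)`, `q ∈ ℝ`, and let `ν` be the inhomogeneous Bernoulli product with weights
`pₙ' = pₙ^q/(pₙ^q + (1-pₙ)^q)` (the Gibbs measure associated to `μ` and `q`). Then for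
every `n ≥ 1` and every `s ∈ ℝ`, `τ_{ν,n}(s) = τ_{μ,n}(qs) - s·τ_{μ,n}(q)`. -/
theorem statement8
    (p : ℕ → ℝ) (hp : ∀ k, p k ∈ Set.Ioo (0 : ℝ) 1)
    (μ : Measure (ℕ → Bool)) (hμ : IsBernoulliProduct p μ) (q : ℝ)
    (ν : Measure (ℕ → Bool))
    (hν : IsBernoulliProduct (fun k => p k ^ q / (p k ^ q + (1 - p k) ^ q)) ν) :
    ∀ n : ℕ, 1 ≤ n → ∀ s : ℝ, tauN ν n s = tauN μ n (q * s) - s * tauN μ n q := by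
  intro n _ s
  have hpos (k : ℕ) : 0 < p k := (hp k).1
  have hpos' (k : ℕ) : 0 < 1 - p k := sub_pos.2 (hp k).2
  have hpIcc (k : ℕ) : p k ∈ Icc (0 : ℝ) 1 := Ioo_subset_Icc_self (hp k)
  set Z : ℝ → ℝ := fun t => ∏ i : Fin n, (p i ^ t + (1 - p i) ^ t)
  have hfactor (i : Fin n) (t : ℝ) : 0 < p i ^ t + (1 - p i) ^ t :=
    add_pos (Real.rpow_pos_of_pos (hpos i) t) (Real.rpow_pos_of_pos (hpos' i) t)
  have hZ (t : ℝ) : 0 < Z t := Finset.prod_pos fun i _ => hfactor i t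
  have hνZ : ∏ i : Fin n, ((p i ^ q / (p i ^ q + (1 - p i) ^ q)) ^ s
      + (1 - p i ^ q / (p i ^ q + (1 - p i) ^ q)) ^ s) = Z (q * s) / Z q ^ s := by
    simp only [one_sub_rpow_div_add_rpow (hpos _) (hpos' _),
      rpow_div_add_rpow_rpow_add (hpos _) (hpos' _), Finset.prod_div_distrib, Z]
    rw [Real.finsetProd_rpow _ _ fun i _ => (hfactor i q).le]
  rw [hν.tauN_eq (fun k => rpow_div_add_rpow_mem_Icc (hpos k) (hpos' k) q), hνZ,
    hμ.tauN_eq hpIcc, hμ.tauN_eq hpIcc,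
    Real.log_div (hZ _).ne' (Real.rpow_pos_of_pos (hZ q) s).ne', Real.log_rpow (hZ q)]
  ring
end
end

section
/- Let μ be an inhomogeneous Bernoulli product on Σ with weights (p_n) ⊂ (0,1), let q > 0, and let (n_k) be a subsequence such that τ_{μ,n_k}(q) → τ_μ(q) = limsup_n τ_{μ,n}(q) as k → ∞. If τ_μ is differentiable at q, then lim_{k→∞} τ_{μ,n_k}'(q) = τ_μ'(q). -/
/-!
Each `τ_{μ,n}` is convex, being a positive multiple of `q ↦ log ∑ aᵢ^q` (Hölder), so its
derivative at `q` is squeezed between the chord slopes over `[y, q]` and `[q, y]`. Along `(n_k)`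
the values at `q` converge to `τ_μ(q)`, while at `y > 0` they are eventually below
`τ_μ(y) + δ` because `τ_{μ,n} ≤ 1` there. Hence the chord slopes of `τ_{μ,n_k}` are eventually
beyond those of `τ_μ` up to any margin, and the latter tend to `τ_μ'(q)` as `y → q`.
-/

open MeasureTheory Filter Set

open Topology

noncomputable section

section ConvexLimit

variable {ι : Type*} {l : Filter ι} {f : ι → ℝ → ℝ} {g : ℝ → ℝ} {x y b : ℝ}

lemma eventually_lt_slope_of_lt_slope (hx : Tendsto (fun i => f i x) l (𝓝 (g x)))
    (hy : ∀ c, g y < c → ∀ᶠ i in l, f i y < c) (hyx : y < x) (hb : b < slope g y x) :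
    ∀ᶠ i in l, b < slope (f i) y x := by
  have hxy : 0 < x - y := sub_pos.2 hyx
  rw [slope_def_field, lt_div_iff₀ hxy] at hb
  have hδ : 0 < (g x - g y - b * (x - y)) / 2 := by linarith
  filter_upwards [hy _ (lt_add_of_pos_right (g y) hδ),
    hx.eventually (eventually_gt_nhds (sub_lt_self (g x) hδ))] with i hiy hix
  rw [slope_def_field, lt_div_iff₀ hxy]
  linarith

lemma eventually_slope_lt_of_slope_lt (hx : Tendsto (fun i => f i x) l (𝓝 (g x)))
    (hy : ∀ c, g y < c → ∀ᶠ i in l, f i y < c) (hxy : x < y) (hb : slope g x y < b) :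
    ∀ᶠ i in l, slope (f i) x y < b := by
  have hyx : 0 < y - x := sub_pos.2 hxy
  rw [slope_def_field, div_lt_iff₀ hyx] at hb
  have hδ : 0 < (b * (y - x) - (g y - g x)) / 2 := by linarith
  filter_upwards [hy _ (lt_add_of_pos_right (g y) hδ),
    hx.eventually (eventually_gt_nhds (sub_lt_self (g x) hδ))] with i hiy hix
  rw [slope_def_field, div_lt_iff₀ hyx]
  linarith

theorem tendsto_deriv_of_convexOn {s : Set ℝ} {q g' : ℝ} (hs : s ∈ 𝓝 q)
    (hf : ∀ i, ConvexOn ℝ s (f i)) (hfd : ∀ i, DifferentiableAt ℝ (f i) q)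
    (hq : Tendsto (fun i => f i q) l (𝓝 (g q)))
    (hle : ∀ᶠ y in 𝓝 q, ∀ c, g y < c → ∀ᶠ i in l, f i y < c) (hg : HasDerivAt g g' q) :
    Tendsto (fun i => deriv (f i) q) l (𝓝 g') := by
  have hslope := hasDerivAt_iff_tendsto_slope.1 hg
  have hnear : ∀ᶠ y in 𝓝 q, y ∈ s ∧ ∀ c, g y < c → ∀ᶠ i in l, f i y < c :=
    (show ∀ᶠ y in 𝓝 q, y ∈ s from hs).and hle
  refine tendsto_order.2 ⟨fun b hb => ?_, fun b hb => ?_⟩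
  · obtain ⟨y, hby, ⟨hys, hy⟩, hyq⟩ :=
      (((hslope.mono_left (nhdsLT_le_nhdsNE q)).eventually (eventually_gt_nhds hb)).and
        ((hnear.filter_mono nhdsWithin_le_nhds).and self_mem_nhdsWithin)).exists
    rw [slope_comm] at hby
    filter_upwards [eventually_lt_slope_of_lt_slope hq hy hyq hby] with i hi
    exact hi.trans_le ((hf i).slope_le_deriv hys (mem_of_mem_nhds hs) hyq (hfd i))
  · obtain ⟨y, hby, ⟨hys, hy⟩, hqy⟩ :=
      (((hslope.mono_left (nhdsGT_le_nhdsNE q)).eventually (eventually_lt_nhds hb)).and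
        ((hnear.filter_mono nhdsWithin_le_nhds).and self_mem_nhdsWithin)).exists
    filter_upwards [eventually_slope_lt_of_slope_lt hq hy hqy hby] with i hi
    exact ((hf i).deriv_le_slope (mem_of_mem_nhds hs) hys hqy (hfd i)).trans_lt hi

end ConvexLimit

section LogSumRpow

open Real Finset

variable {ι : Type*} (s : Finset ι) {a : ι → ℝ}

theorem sum_rpow_add_le_rpow_mul_rpow (ha : ∀ i ∈ s, 0 < a i) {t u : ℝ} (ht : 0 < t)
    (hu : 0 < u) (htu : t + u = 1) (x y : ℝ) :
    ∑ i ∈ s, a i ^ (t * x + u * y) ≤ (∑ i ∈ s, a i ^ x) ^ t * (∑ i ∈ s, a i ^ y) ^ u := by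
  have hpow : ∀ {c : ℝ}, 0 < c → ∀ z : ℝ,
      ∑ i ∈ s, (a i ^ (c * z)) ^ (1 / c) = ∑ i ∈ s, a i ^ z :=
    fun hc z => sum_congr rfl fun i hi => by
      rw [← rpow_mul (ha i hi).le]; congr 1; field_simp
  calc ∑ i ∈ s, a i ^ (t * x + u * y) = ∑ i ∈ s, a i ^ (t * x) * a i ^ (u * y) :=
        sum_congr rfl fun i hi => rpow_add (ha i hi) _ _
    _ ≤ (∑ i ∈ s, (a i ^ (t * x)) ^ (1 / t)) ^ (1 / (1 / t)) *
          (∑ i ∈ s, (a i ^ (u * y)) ^ (1 / u)) ^ (1 / (1 / u)) :=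
        inner_le_Lp_mul_Lq_of_nonneg s (holderConjugate_one_div ht hu htu)
          (fun i hi => (rpow_pos_of_pos (ha i hi) _).le)
          (fun i hi => (rpow_pos_of_pos (ha i hi) _).le)
    _ = (∑ i ∈ s, a i ^ x) ^ t * (∑ i ∈ s, a i ^ y) ^ u := by
        rw [hpow ht, hpow hu, one_div_one_div, one_div_one_div]

theorem convexOn_log_sum_rpow (ha : ∀ i ∈ s, 0 < a i) :
    ConvexOn ℝ univ fun x : ℝ => log (∑ i ∈ s, a i ^ x) := by
  rcases s.eq_empty_or_nonempty with rfl | hs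
  · simpa using convexOn_const (0 : ℝ) convex_univ
  have hS : ∀ z : ℝ, 0 < ∑ i ∈ s, a i ^ z :=
    fun z => sum_pos (fun i hi => rpow_pos_of_pos (ha i hi) z) hs
  refine convexOn_iff_forall_pos.2 ⟨convex_univ, fun x _ y _ t u ht hu htu => ?_⟩
  simp only [smul_eq_mul]
  rw [← log_rpow (hS x), ← log_rpow (hS y),
    ← log_mul (rpow_pos_of_pos (hS x) t).ne' (rpow_pos_of_pos (hS y) u).ne']
  exact log_le_log (hS _) (sum_rpow_add_le_rpow_mul_rpow s ha ht hu htu x y)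

end LogSumRpow

section LqSpectrum

variable {μ : Measure (ℕ → Bool)} {n : ℕ}

theorem convexOn_tauN (hpos : ∀ ε : Fin n → Bool, 0 < (μ (cyl ε)).toReal) :
    ConvexOn ℝ univ (tauN μ n) :=
  (convexOn_log_sum_rpow _ fun ε _ => hpos ε).smul (by positivity)

theorem differentiable_tauN (hpos : ∀ ε : Fin n → Bool, 0 < (μ (cyl ε)).toReal) :
    Differentiable ℝ (tauN μ n) := by
  intro x
  have hS : ∑ ε : Fin n → Bool, (μ (cyl ε)).toReal ^ x ≠ 0 :=
    (Finset.sum_pos (fun ε _ => Real.rpow_pos_of_pos (hpos ε) x) Finset.univ_nonempty).ne'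
  unfold tauN
  fun_prop (disch := first | exact hS | exact (hpos _).ne')

theorem tauN_le_one [IsZeroOrProbabilityMeasure μ] (n : ℕ) {x : ℝ} (hx : 0 ≤ x) :
    tauN μ n x ≤ 1 := by
  rcases n.eq_zero_or_pos with rfl | hn
  · simp [tauN]
  have hsum : ∑ ε : Fin n → Bool, (μ (cyl ε)).toReal ^ x ≤ 2 ^ n := by
    calc ∑ ε : Fin n → Bool, (μ (cyl ε)).toReal ^ x ≤ ∑ _ε : Fin n → Bool, (1 : ℝ) :=
          Finset.sum_le_sum fun ε _ => Real.rpow_le_one ENNReal.toReal_nonneg measureReal_le_one hx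
      _ = 2 ^ n := by simp
  have hlog : Real.log (∑ ε : Fin n → Bool, (μ (cyl ε)).toReal ^ x) ≤ n * Real.log 2 := by
    rw [← Real.log_pow]
    rcases (Finset.sum_nonneg fun ε _ => Real.rpow_nonneg ENNReal.toReal_nonneg x).eq_or_lt
      with h0 | h0
    · rw [← h0, Real.log_zero]
      exact Real.log_nonneg (one_le_pow₀ one_le_two)
    · exact Real.log_le_log h0 hsum
  rw [tauN, one_div_mul_eq_div, div_le_one (by positivity)]
  exact hlog

end LqSpectrum

theorem IsBernoulliProduct.toReal_measure_cyl_pos {p : ℕ → ℝ} {μ : Measure (ℕ → Bool)}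
    (hp : ∀ k, p k ∈ Ioo (0 : ℝ) 1) (hμ : IsBernoulliProduct p μ) {n : ℕ} (ε : Fin n → Bool) :
    0 < (μ (cyl ε)).toReal := by
  have hprod : 0 < ∏ i : Fin n, if ε i then 1 - p i else p i :=
    Finset.prod_pos fun i _ => by split_ifs <;> linarith [(hp i).1, (hp i).2]
  rw [hμ.2 n ε, ENNReal.toReal_ofReal hprod.le]
  exact hprod

/-- Proposition 3.1. Let `μ` be an inhomogeneous Bernoulli product
with weights `(pₙ) ⊂ (0,1)`, `q > 0`, and let `(n_k)` be a (strictly increasing)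
subsequence such that `τ_{μ,n_k}(q) → τ_μ(q) = limsup_n τ_{μ,n}(q)`. If `τ_μ` is
differentiable at `q` then `τ_{μ,n_k}'(q) → τ_μ'(q)`. -/
theorem statement11
    (p : ℕ → ℝ) (hp : ∀ k, p k ∈ Set.Ioo (0 : ℝ) 1)
    (μ : Measure (ℕ → Bool)) (hμ : IsBernoulliProduct p μ)
    (q : ℝ) (hq : 0 < q)
    (φ : ℕ → ℕ) (hφ : StrictMono φ)
    (hconv : Tendsto (fun k : ℕ => tauN μ (φ k) q) atTop (nhds (tauLq μ q)))
    (τ' : ℝ) (hτ' : HasDerivAt (tauLq μ) τ' q) :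
    Tendsto (fun k : ℕ => deriv (tauN μ (φ k)) q) atTop (nhds τ') := by
  have := hμ.1
  have hpos : ∀ {n} (ε : Fin n → Bool), 0 < (μ (cyl ε)).toReal := hμ.toReal_measure_cyl_pos hp
  refine tendsto_deriv_of_convexOn univ_mem (fun _ => convexOn_tauN hpos)
    (fun _ => differentiable_tauN hpos q) hconv ?_ hτ'
  filter_upwards [Ioi_mem_nhds hq] with y hy c hc
  have hbdd : IsBoundedUnder (· ≤ ·) atTop fun n => tauN μ n y :=
    isBoundedUnder_of ⟨1, fun n => tauN_le_one n (le_of_lt hy)⟩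
  exact hφ.tendsto_atTop.eventually (eventually_lt_of_limsup_lt hc hbdd)
end
end

section
/- Let μ be an inhomogeneous Bernoulli product on Σ with weights (p_n) ⊂ (0,1), let q > 0, and let (n_k) be a subsequence such that τ_{μ,n_k}(q) → τ_μ(q) = limsup_n τ_{μ,n}(q) as k → ∞. Then τ_μ'(q^-) ≤ liminf_{k→∞} τ_{μ,n_k}'(q), where τ_μ'(q^-) is the left derivative of the convex function τ_μ at q. -/
/-!
Each `τ_{μ,n} = c_n log ∑_I μ(I)^q` is convex in `q` (Jensen's inequality for `log`), so for
`s < q` its secant slope on `[s, q]` is at most `τ_{μ,n}'(q)`. Along `(n_k)` the values at `q`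
converge to `τ_μ(q)`, while at `s` they are eventually below `τ_μ(s) + δ`; hence every left
secant slope of `τ_μ` at `q` is at most `liminf_k τ_{μ,n_k}'(q)`, and letting `s ↑ q` bounds the
left derivative. Taking `0 ≤ s` keeps `τ_{μ,n}(s) ≤ 1`, so the limsup defining `τ_μ(s)` is
not a junk value.
-/

open MeasureTheory Filter Set

noncomputable section

open Topology

section LogSumRpow

variable {ι : Type*} [Fintype ι] [Nonempty ι] {a : ι → ℝ}

lemma sum_rpow_pos (ha : ∀ i, 0 < a i) (t : ℝ) : 0 < ∑ i, a i ^ t :=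
  Finset.sum_pos (fun i _ => Real.rpow_pos_of_pos (ha i) t) Finset.univ_nonempty

lemma hasDerivAt_log_sum_rpow (ha : ∀ i, 0 < a i) (q : ℝ) :
    HasDerivAt (fun t => Real.log (∑ i, a i ^ t))
      ((∑ i, a i ^ q * Real.log (a i)) / ∑ i, a i ^ q) q :=
  (HasDerivAt.fun_sum fun i _ => (Real.hasStrictDerivAt_const_rpow (ha i) q).hasDerivAt).log
    (sum_rpow_pos ha q).ne'

lemma log_sum_rpow_sub_le (ha : ∀ i, 0 < a i) (s q : ℝ) :
    Real.log (∑ i, a i ^ q) - Real.log (∑ i, a i ^ s) ≤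
      (q - s) * deriv (fun t => Real.log (∑ i, a i ^ t)) q := by
  set S := ∑ i, a i ^ q
  have hS : 0 < S := sum_rpow_pos ha q
  rw [(hasDerivAt_log_sum_rpow ha q).deriv]
  -- Jensen for `log` with weights `a i ^ q / S` at the points `a i ^ (s - q)`.
  have jensen := strictConcaveOn_log_Ioi.concaveOn.le_map_sum (t := Finset.univ)
    (w := fun i => a i ^ q / S) (p := fun i => a i ^ (s - q))
    (fun i _ => div_nonneg (Real.rpow_pos_of_pos (ha i) q).le hS.le)
    (by rw [← Finset.sum_div, div_self hS.ne'])
    (fun i _ => mem_Ioi.2 (Real.rpow_pos_of_pos (ha i) _))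
  have hmean : ∑ i, (a i ^ q / S) • a i ^ (s - q) = (∑ i, a i ^ s) / S := by
    rw [Finset.sum_div]
    refine Finset.sum_congr rfl fun i _ => ?_
    rw [smul_eq_mul, div_mul_eq_mul_div, ← Real.rpow_add (ha i), add_sub_cancel]
  have hlog : ∑ i, (a i ^ q / S) • Real.log (a i ^ (s - q))
      = (s - q) * ((∑ i, a i ^ q * Real.log (a i)) / S) := by
    rw [Finset.sum_div, Finset.mul_sum]
    refine Finset.sum_congr rfl fun i _ => ?_
    rw [smul_eq_mul, Real.log_rpow (ha i)]
    ring
  rw [hmean, hlog, Real.log_div (sum_rpow_pos ha s).ne' hS.ne'] at jensen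
  linarith

lemma deriv_log_sum_rpow_nonpos (ha : ∀ i, 0 < a i) (ha₁ : ∀ i, a i ≤ 1) (q : ℝ) :
    deriv (fun t => Real.log (∑ i, a i ^ t)) q ≤ 0 := by
  rw [(hasDerivAt_log_sum_rpow ha q).deriv]
  refine div_nonpos_of_nonpos_of_nonneg (Finset.sum_nonpos fun i _ => ?_) (sum_rpow_pos ha q).le
  exact mul_nonpos_of_nonneg_of_nonpos (Real.rpow_pos_of_pos (ha i) q).le
    (Real.log_nonpos (ha i).le (ha₁ i))

lemma log_sum_rpow_le_log_card (ha : ∀ i, 0 < a i) (ha₁ : ∀ i, a i ≤ 1) {t : ℝ} (ht : 0 ≤ t) :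
    Real.log (∑ i, a i ^ t) ≤ Real.log (Fintype.card ι) := by
  refine Real.log_le_log (sum_rpow_pos ha t) ?_
  calc ∑ i, a i ^ t ≤ ∑ _i : ι, (1 : ℝ) :=
        Finset.sum_le_sum fun i _ => Real.rpow_le_one (ha i).le (ha₁ i) ht
    _ = Fintype.card ι := by simp

end LogSumRpow

section Bernoulli

variable {p : ℕ → ℝ} {μ : Measure (ℕ → Bool)}

lemma IsBernoulliProduct.measure_cyl_toReal_pos (hp : ∀ k, p k ∈ Ioo (0 : ℝ) 1)
    (hμ : IsBernoulliProduct p μ) (n : ℕ) (ε : Fin n → Bool) : 0 < (μ (cyl ε)).toReal := by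
  have hfactor : ∀ i : Fin n, 0 < (if ε i then 1 - p i else p i) := fun i => by
    obtain ⟨h0, h1⟩ := hp i
    split <;> linarith
  have hprod := Finset.prod_pos fun i (_ : i ∈ Finset.univ) => hfactor i
  rwa [hμ.2 n ε, ENNReal.toReal_ofReal hprod.le]

lemma IsBernoulliProduct.measure_cyl_toReal_le_one (hμ : IsBernoulliProduct p μ) (n : ℕ)
    (ε : Fin n → Bool) : (μ (cyl ε)).toReal ≤ 1 :=
  haveI := hμ.1
  measureReal_le_one

lemma tauN_sub_le_mul_deriv (hp : ∀ k, p k ∈ Ioo (0 : ℝ) 1) (hμ : IsBernoulliProduct p μ)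
    (n : ℕ) (s q : ℝ) :
    tauN μ n q - tauN μ n s ≤ (q - s) * deriv (tauN μ n) q := by
  have hc : 0 ≤ 1 / (n * Real.log 2) := by positivity
  have h := mul_le_mul_of_nonneg_left
    (log_sum_rpow_sub_le (hμ.measure_cyl_toReal_pos hp n) s q) hc
  unfold tauN
  rw [deriv_const_mul_field']
  linarith

lemma deriv_tauN_nonpos (hp : ∀ k, p k ∈ Ioo (0 : ℝ) 1) (hμ : IsBernoulliProduct p μ)
    (n : ℕ) (q : ℝ) : deriv (tauN μ n) q ≤ 0 := by
  unfold tauN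
  rw [deriv_const_mul_field']
  exact mul_nonpos_of_nonneg_of_nonpos (by positivity)
    (deriv_log_sum_rpow_nonpos (hμ.measure_cyl_toReal_pos hp n)
      (hμ.measure_cyl_toReal_le_one n) q)

lemma tauN_le_one_s13 (hp : ∀ k, p k ∈ Ioo (0 : ℝ) 1) (hμ : IsBernoulliProduct p μ)
    (n : ℕ) {s : ℝ} (hs : 0 ≤ s) : tauN μ n s ≤ 1 := by
  have hlog := log_sum_rpow_le_log_card (hμ.measure_cyl_toReal_pos hp n)
    (hμ.measure_cyl_toReal_le_one n) hs
  rw [Fintype.card_fun, Fintype.card_bool, Fintype.card_fin, Nat.cast_pow, Real.log_pow,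
    Nat.cast_ofNat] at hlog
  calc tauN μ n s ≤ 1 / (n * Real.log 2) * (n * Real.log 2) :=
        mul_le_mul_of_nonneg_left hlog (by positivity)
    _ ≤ 1 := by
        rcases eq_or_ne (n : ℝ) 0 with h | h
        · simp [h]
        · rw [one_div_mul_cancel (by positivity)]

end Bernoulli

lemma slope_limsup_le_liminf_deriv {f : ℕ → ℝ → ℝ} {φ : ℕ → ℕ} (hφ : Tendsto φ atTop atTop)
    {s q : ℝ} (hsq : s < q) (hsec : ∀ n, f n q - f n s ≤ (q - s) * deriv (f n) q)
    (hconv : Tendsto (fun k => f (φ k) q) atTop (𝓝 (limsup (fun n => f n q) atTop)))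
    (hbdd : IsBoundedUnder (· ≤ ·) atTop fun n => f n s)
    (hcob : IsCoboundedUnder (· ≥ ·) atTop fun k => deriv (f (φ k)) q) :
    slope (fun t => limsup (fun n => f n t) atTop) s q ≤
      liminf (fun k => deriv (f (φ k)) q) atTop := by
  set F := fun t => limsup (fun n => f n t) atTop
  have hqs : 0 < q - s := sub_pos.2 hsq
  rw [slope_def_field]
  refine le_of_forall_lt_imp_le_of_dense fun c hc => le_liminf_of_le hcob ?_
  rw [lt_div_iff₀ hqs] at hc
  obtain ⟨δ, hδ, hgap⟩ : ∃ δ > 0, c * (q - s) + 2 * δ = F q - F s :=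
    ⟨(F q - F s - c * (q - s)) / 2, by linarith, by ring⟩
  have hnear_q : ∀ᶠ k in atTop, F q - δ < f (φ k) q :=
    hconv.eventually (eventually_gt_nhds (by linarith))
  have hbelow_s : ∀ᶠ k in atTop, f (φ k) s < F s + δ :=
    hφ.eventually (eventually_lt_of_limsup_lt (lt_add_of_pos_right _ hδ) hbdd)
  filter_upwards [hnear_q, hbelow_s] with k hkq hks
  exact le_of_mul_le_mul_left (by linarith [hsec (φ k)]) hqs

/-- Lemma 3.3. Let `μ` be an inhomogeneous Bernoulli product with
weights `(pₙ) ⊂ (0,1)`, `q > 0`, and let `(n_k)` be a (strictly increasing) subsequence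
such that `τ_{μ,n_k}(q) → τ_μ(q) = limsup_n τ_{μ,n}(q)`. Then
`τ_μ'(q⁻) ≤ liminf_k τ_{μ,n_k}'(q)`, where `αm = τ_μ'(q⁻)` is the left derivative of
the convex function `τ_μ` at `q`. -/
theorem statement13
    (p : ℕ → ℝ) (hp : ∀ k, p k ∈ Set.Ioo (0 : ℝ) 1)
    (μ : Measure (ℕ → Bool)) (hμ : IsBernoulliProduct p μ)
    (q : ℝ) (hq : 0 < q)
    (φ : ℕ → ℕ) (hφ : StrictMono φ)
    (hconv : Tendsto (fun k : ℕ => tauN μ (φ k) q) atTop (nhds (tauLq μ q)))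
    (αm : ℝ) (hαm : HasDerivWithinAt (tauLq μ) αm (Set.Iio q) q) :
    αm ≤ liminf (fun k : ℕ => deriv (tauN μ (φ k)) q) atTop := by
  have hcob : IsCoboundedUnder (· ≥ ·) atTop fun k => deriv (tauN μ (φ k)) q :=
    isCoboundedUnder_ge_of_le atTop fun k => deriv_tauN_nonpos hp hμ (φ k) q
  have hslope : ∀ᶠ s in 𝓝[<] q,
      slope (tauLq μ) q s ≤ liminf (fun k => deriv (tauN μ (φ k)) q) atTop := by
    filter_upwards [self_mem_nhdsWithin, nhdsWithin_le_nhds (eventually_gt_nhds hq)]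
      with s hsq hs
    rw [slope_comm]
    exact slope_limsup_le_liminf_deriv hφ.tendsto_atTop hsq
      (fun n => tauN_sub_le_mul_deriv hp hμ n s q) hconv
      (isBoundedUnder_of ⟨1, fun n => tauN_le_one_s13 hp hμ n hs.le⟩) hcob
  exact le_of_tendsto ((hasDerivWithinAt_iff_tendsto_slope' self_notMem_Iio).1 hαm) hslope
end
end

section
/- For any p_1,…,p_n ∈ (0,1) and any convex combination τ = Σ_{i=1}^n λ_i τ(p_i,·) (λ_i ≥ 0, Σλ_i = 1), there exists a sequence (p_k') taking values in {p_1,…,p_n} such that the inhomogeneous Bernoulli product μ with weights (p_k') satisfies lim_{m→∞} τ_{μ,m}(q) = τ(q) for every q ∈ ℝ; in particular the L^q-spectrum τ_μ of μ equals τ. -/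
open MeasureTheory Filter Set

noncomputable section

/-- `τ(p,q) = log(p^q + (1-p)^q) / log 2`, the `L^q`-spectrum of the homogeneous
Bernoulli product with weight `p`. -/
def taup (p q : ℝ) : ℝ :=
  Real.log (p ^ q + (1 - p) ^ q) / Real.log 2


/-!
For every inhomogeneous Bernoulli product the partition function factorizes,
`∑_{I ∈ F_m} μ(I)^q = ∏_{k<m} (p_k^q + (1-p_k)^q)`, so `τ_{μ,m}(q)` is the Cesàro mean
`(1/m) ∑_{k<m} τ(p_k, q)`. It therefore suffices to use each weight `pᵢ` with asymptotic
frequency `λᵢ`. A greedy rule does this: at step `m` use the index `i` whose deficit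
`(m + 1) λᵢ - #{k < m : i was used at step k}` is largest. The deficits sum to `0` and never drop
below `-1`, so they stay bounded and the Cesàro means converge to `∑ᵢ λᵢ τ(pᵢ, q)`.
-/

lemma cyl_eq_pi {m : ℕ} (ε : Fin m → Bool) :
    cyl ε = Set.pi (Finset.range m) fun k => if h : k < m then {ε ⟨k, h⟩} else Set.univ := by
  ext x
  simp only [cyl, Set.mem_pi, Finset.coe_range, Set.mem_Iio]
  constructor
  · intro hx k hk
    simp [hk, hx ⟨k, hk⟩]
  · intro hx i
    simpa [i.isLt] using hx i i.isLt

open ProbabilityTheory in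
lemma exists_isBernoulliProduct (p : ℕ → ℝ) (hp : ∀ k, p k ∈ Set.Icc (0 : ℝ) 1) :
    ∃ μ : Measure (ℕ → Bool), IsBernoulliProduct p μ := by
  refine ⟨Measure.infinitePi fun k => Ber(false, true, ⟨p k, hp k⟩), inferInstance, fun m ε => ?_⟩
  rw [cyl_eq_pi, Measure.infinitePi_pi (μ := fun k => Ber(false, true, ⟨p k, hp k⟩))
    (by intros; split <;> measurability), ← Fin.prod_univ_eq_prod_range,
    ENNReal.ofReal_prod_of_nonneg]
  · refine Finset.prod_congr rfl fun i _ => ?_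
    cases hε : ε i <;> simp [i.isLt, hε, ← ENNReal.ofReal_coe_nnreal]
  · intro i _
    have := hp i
    split <;> linarith [this.1, this.2]

lemma IsBernoulliProduct.sum_rpow_measure_cyl {p : ℕ → ℝ} {μ : Measure (ℕ → Bool)}
    (hμ : IsBernoulliProduct p μ) (hp : ∀ k, p k ∈ Set.Icc (0 : ℝ) 1) (m : ℕ) (q : ℝ) :
    ∑ ε : Fin m → Bool, (μ (cyl ε)).toReal ^ q = ∏ i : Fin m, (p i ^ q + (1 - p i) ^ q) := by
  have hweight (i : Fin m) (b : Bool) : 0 ≤ if b then 1 - p i else p i := by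
    have := hp i
    split <;> linarith [this.1, this.2]
  simp_rw [hμ.2, ENNReal.toReal_ofReal (Finset.prod_nonneg fun i _ => hweight i _),
    ← Real.finsetProd_rpow _ _ (fun i _ => hweight i _)]
  rw [← Fintype.prod_sum fun (i : Fin m) (b : Bool) => (if b then 1 - p i else p i) ^ q]
  simp [add_comm]

lemma IsBernoulliProduct.tauN_eq_s19 {p : ℕ → ℝ} {μ : Measure (ℕ → Bool)}
    (hμ : IsBernoulliProduct p μ) (hp : ∀ k, p k ∈ Set.Ioo (0 : ℝ) 1) (m : ℕ) (q : ℝ) :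
    tauN μ m q = (∑ k ∈ Finset.range m, taup (p k) q) / m := by
  have hpos (k : ℕ) : 0 < p k ^ q + (1 - p k) ^ q :=
    add_pos (Real.rpow_pos_of_pos (hp k).1 q) (Real.rpow_pos_of_pos (sub_pos.2 (hp k).2) q)
  rw [tauN, hμ.sum_rpow_measure_cyl (fun k => Set.Ioo_subset_Icc_self (hp k)),
    Real.log_prod (f := fun i : Fin m => p i ^ q + (1 - p i) ^ q) fun i _ => (hpos i).ne',
    Fin.sum_univ_eq_sum_range fun k => Real.log (p k ^ q + (1 - p k) ^ q)]
  simp only [taup, ← Finset.sum_div]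
  field_simp

section GreedyAllocation

variable {ι : Type*} [Fintype ι] [DecidableEq ι] [Nonempty ι] (w : ι → ℝ)

/-- `greedyDeficit w m i = m * w i - #{k < m | greedySeq w k = i}`. -/
def greedyDeficit : ℕ → ι → ℝ
  | 0 => 0
  | m + 1 => greedyDeficit m + w -
      Pi.single (Classical.choose (Finite.exists_max (greedyDeficit m + w))) 1

def greedySeq (m : ℕ) : ι :=
  Classical.choose (Finite.exists_max (greedyDeficit w m + w))

lemma greedyDeficit_succ (m : ℕ) :
    greedyDeficit w (m + 1) = greedyDeficit w m + w - Pi.single (greedySeq w m) 1 :=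
  rfl

lemma greedyDeficit_add_le (m : ℕ) (i : ι) :
    greedyDeficit w m i + w i ≤ greedyDeficit w m (greedySeq w m) + w (greedySeq w m) :=
  Classical.choose_spec (Finite.exists_max (greedyDeficit w m + w)) i

lemma sum_range_greedySeq (g : ι → ℝ) (m : ℕ) :
    ∑ k ∈ Finset.range m, g (greedySeq w k) =
      m * ∑ i, w i * g i - ∑ i, greedyDeficit w m i * g i := by
  induction m with
  | zero => simp [greedyDeficit]
  | succ m ih =>
    simp only [Finset.sum_range_succ, ih, greedyDeficit_succ, Pi.sub_apply, Pi.add_apply, sub_mul,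
      add_mul, Finset.sum_sub_distrib, Finset.sum_add_distrib, Pi.single_apply, ite_mul, one_mul,
      zero_mul, Finset.sum_ite_eq', Finset.mem_univ, if_true, Nat.cast_add, Nat.cast_one]
    ring

variable {w}

lemma sum_greedyDeficit (hw : ∑ i, w i = 1) (m : ℕ) : ∑ i, greedyDeficit w m i = 0 := by
  induction m with
  | zero => simp [greedyDeficit]
  | succ m ih => simp [greedyDeficit_succ, Finset.sum_add_distrib, Finset.sum_sub_distrib, ih, hw]

lemma neg_one_le_greedyDeficit (hw₀ : ∀ i, 0 ≤ w i) (hw : ∑ i, w i = 1) (m : ℕ) (i : ι) :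
    -1 ≤ greedyDeficit w m i := by
  induction m generalizing i with
  | zero => simp [greedyDeficit]
  | succ m ih =>
    rw [greedyDeficit_succ]
    by_cases hi : i = greedySeq w m
    · subst hi
      -- the shares `greedyDeficit w m j + w j` sum to `1`, so the largest one is nonnegative
      have hmax : 0 ≤ greedyDeficit w m (greedySeq w m) + w (greedySeq w m) := by
        by_contra! hneg
        have := Finset.sum_lt_sum_of_nonempty Finset.univ_nonempty
          fun j _ => (greedyDeficit_add_le w m j).trans_lt hneg
        norm_num [Finset.sum_add_distrib, sum_greedyDeficit hw, hw] at this
      rw [Pi.sub_apply, Pi.add_apply, Pi.single_eq_same]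
      linarith
    · rw [Pi.sub_apply, Pi.add_apply, Pi.single_eq_of_ne hi, sub_zero]
      linarith [ih i, hw₀ i]

lemma abs_greedyDeficit_le (hw₀ : ∀ i, 0 ≤ w i) (hw : ∑ i, w i = 1) (m : ℕ) (i : ι) :
    |greedyDeficit w m i| ≤ Fintype.card ι := by
  have hle : greedyDeficit w m i + 1 ≤ ∑ j, (greedyDeficit w m j + 1) :=
    Finset.single_le_sum (f := fun j => greedyDeficit w m j + 1)
      (fun j _ => by linarith [neg_one_le_greedyDeficit hw₀ hw m j])
      (Finset.mem_univ i)
  rw [Finset.sum_add_distrib, sum_greedyDeficit hw] at hle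
  simp only [Finset.sum_const, Finset.card_univ, nsmul_eq_mul, mul_one, zero_add] at hle
  have hcard : (1 : ℝ) ≤ Fintype.card ι := by exact_mod_cast Fintype.card_pos
  rw [abs_le]
  constructor <;> linarith [neg_one_le_greedyDeficit hw₀ hw m i]

lemma tendsto_average_greedySeq (hw₀ : ∀ i, 0 ≤ w i) (hw : ∑ i, w i = 1) (g : ι → ℝ) :
    Tendsto (fun m : ℕ => (∑ k ∈ Finset.range m, g (greedySeq w k)) / m) atTop
      (nhds (∑ i, w i * g i)) := by
  set C := ∑ i, Fintype.card ι * |g i|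
  have hbound (m : ℕ) : ‖∑ i, greedyDeficit w m i * g i‖ ≤ C := by
    rw [Real.norm_eq_abs]
    refine (Finset.abs_sum_le_sum_abs _ _).trans (Finset.sum_le_sum fun i _ => ?_)
    rw [abs_mul]
    exact mul_le_mul_of_nonneg_right (abs_greedyDeficit_le hw₀ hw m i) (abs_nonneg _)
  have hdeficit : Tendsto (fun m : ℕ => (∑ i, greedyDeficit w m i * g i) / m) atTop (nhds 0) := by
    refine squeeze_zero_norm (fun m => ?_) (tendsto_const_div_atTop_nhds_zero_nat C)
    rw [norm_div, RCLike.norm_natCast]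
    exact div_le_div_of_nonneg_right (hbound m) m.cast_nonneg
  rw [← sub_zero (∑ i, w i * g i)]
  refine (tendsto_const_nhds.sub hdeficit).congr' ?_
  filter_upwards [eventually_ne_atTop 0] with m hm
  rw [sum_range_greedySeq, sub_div, mul_div_cancel_left₀ _ (Nat.cast_ne_zero.2 hm)]

end GreedyAllocation

theorem exists_seq_tendsto_average {ι : Type*} [Fintype ι] (w : ι → ℝ) (hw₀ : ∀ i, 0 ≤ w i)
    (hw : ∑ i, w i = 1) :
    ∃ s : ℕ → ι, ∀ g : ι → ℝ,
      Tendsto (fun m : ℕ => (∑ k ∈ Finset.range m, g (s k)) / m) atTop (nhds (∑ i, w i * g i)) := by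
  classical
  have : Nonempty ι := by
    by_contra h
    simp [not_nonempty_iff.1 h] at hw
  exact ⟨greedySeq w, tendsto_average_greedySeq hw₀ hw⟩

/-- Lemma 5.5. For any `p₁,…,pₙ ∈ (0,1)` and any convex combination
`τ = ∑ᵢ λᵢ τ(pᵢ,·)` (`λᵢ ≥ 0`, `∑λᵢ = 1`) there is a sequence `(pₖ')` taking values in
`{p₁,…,pₙ}` whose inhomogeneous Bernoulli product `μ` satisfies
`τ_{μ,m}(q) → τ(q)` for every `q ∈ ℝ`; in particular the `L^q`-spectrum of `μ` is `τ`. -/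
theorem statement19
    (n : ℕ) (P : Fin n → ℝ) (hP : ∀ i, P i ∈ Set.Ioo (0 : ℝ) 1)
    (lam : Fin n → ℝ) (hlam : ∀ i, 0 ≤ lam i) (hsum : ∑ i, lam i = 1) :
    ∃ p' : ℕ → ℝ, (∀ k : ℕ, ∃ i : Fin n, p' k = P i) ∧
      ∃ μ : Measure (ℕ → Bool), IsBernoulliProduct p' μ ∧
        (∀ q : ℝ,
          Tendsto (fun m : ℕ => tauN μ m q) atTop
            (nhds (∑ i, lam i * taup (P i) q))) ∧
        ∀ q : ℝ, tauLq μ q = ∑ i, lam i * taup (P i) q := by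
  obtain ⟨s, hs⟩ := exists_seq_tendsto_average lam hlam hsum
  have hp' (k : ℕ) : P (s k) ∈ Set.Ioo (0 : ℝ) 1 := hP (s k)
  obtain ⟨μ, hμ⟩ := exists_isBernoulliProduct (fun k => P (s k))
    fun k => Set.Ioo_subset_Icc_self (hp' k)
  have hlim (q : ℝ) :
      Tendsto (fun m : ℕ => tauN μ m q) atTop (nhds (∑ i, lam i * taup (P i) q)) := by
    simpa only [hμ.tauN_eq_s19 hp'] using hs fun i => taup (P i) q
  exact ⟨fun k => P (s k), fun k => ⟨s k, rfl⟩, μ, hμ, hlim, fun q => (hlim q).limsup_eq⟩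
end
end
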